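/- arXiv:1803.05112 — 6 statements merged into one kernel-verified Lean document; each statement's English description precedes it below -/
import Mathlib

section
/- Let X be a measurable space, and for k = 1, 2 let p_k(y, t | x) be conditional distributions with common outcome kernel p(y | x, t) (i.e., p_k(y | x, t) = p(y | x, t)) where t ∈ {-1, 1} and y ∈ ℝ. Define u(x) = E[y | x, t=1] - E[y | x, t=-1]. Then for every x with p_1(t=1|x) ≠ p_2(t=1|x), u(x) = 2 (E_{p_1(y|x)}[y] - E_{p_2(y|x)}[y]) / (E_{p_1(t|x)}[t] - E_{p_2(t|x)}[t]). -/
theorem mixture_sub_mixture {R : Type*} [CommRing R] (a b p q : R) :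
    (a * p + b * (1 - p)) - (a * q + b * (1 - q)) = (a - b) * (p - q) := by
  ring

theorem sign_mean_sub_sign_mean {R : Type*} [CommRing R] (p q : R) :
    (p - (1 - p)) - (q - (1 - q)) = 2 * (p - q) := by
  ring

/-- Lemma 1 (uplift as ratio of differences): two populations share the outcome
kernel, represented via its conditional means `m1 x = E[y | x, t = 1]` and
`mm1 x = E[y | x, t = -1]`; `q1 x`, `q2 x` are the treatment probabilities
`p_k(t = 1 | x)`.  Then `p_k(y|x)`'s mean is `m1 x * qk x + mm1 x * (1 - qk x)`
and `E_{p_k(t|x)}[t] = qk x - (1 - qk x)`.  The individual uplift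
`u x = m1 x - mm1 x` equals twice the ratio of differences whenever
`q1 x ≠ q2 x`. -/
theorem uplift_eq_diff_ratio {X : Type*} (m1 mm1 q1 q2 : X → ℝ) (x : X)
    (h : q1 x ≠ q2 x) :
    m1 x - mm1 x =
      2 * (((m1 x * q1 x + mm1 x * (1 - q1 x)) - (m1 x * q2 x + mm1 x * (1 - q2 x)))
        / ((q1 x - (1 - q1 x)) - (q2 x - (1 - q2 x)))) := by
  have hq : q1 x - q2 x ≠ 0 := sub_ne_zero.mpr h
  rw [mixture_sub_mixture, sign_mean_sub_sign_mean, mul_div_mul_right _ _ hq,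
    mul_div_cancel₀ _ two_ne_zero]
end

section
/- Define auxiliary random variables z and w by the mixture conditionals p(z = z₀ | x) = ½ p_1(y = z₀ | x) + ½ p_2(y = -z₀ | x) and p(w = w₀ | x) = ½ p_1(t = w₀ | x) + ½ p_2(t = -w₀ | x). Then E[z | x] = ½(E_{p_1(y|x)}[y] - E_{p_2(y|x)}[y]) and E[w | x] = ½(E_{p_1(t|x)}[t] - E_{p_2(t|x)}[t]); consequently, for every x with p_1(t|x) ≠ p_2(t|x), u(x) = 2 E[z|x] / E[w|x]. -/
/-!
Here `ν1 x`, `νm1 x` are the outcome laws `p(y|x,t=±1)` and `q_k x = p_k(t=1|x)`.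
Both auxiliary means are linear in the two mixtures: pushing forward by `y ↦ -y` negates the
mean, so `E[z|x]` and `E[w|x]` are half the differences of the population means. Since
`p_k(y|x)` mixes `p(y|x,t=±1)` with weights `q_k, 1 - q_k`, the difference of the outcome means
is `(q₁ - q₂) u(x)`, while that of the treatment means is `2 (q₁ - q₂)`; their ratio is `u(x)`.
-/

open MeasureTheory
open scoped ENNReal

section Mixture

variable {α E : Type*} [MeasurableSpace α] [NormedAddCommGroup E] {f : α → E} {μ ν : Measure α}

lemma MeasureTheory.Integrable.ofReal_smul_add_ofReal_smul_measure (hμ : Integrable f μ)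
    (hν : Integrable f ν) (a b : ℝ) : Integrable f (ENNReal.ofReal a • μ + ENNReal.ofReal b • ν) :=
  (hμ.smul_measure ENNReal.ofReal_ne_top).add_measure (hν.smul_measure ENNReal.ofReal_ne_top)

lemma integral_ofReal_smul_add_ofReal_smul_measure [NormedSpace ℝ E] (hμ : Integrable f μ)
    (hν : Integrable f ν) {a b : ℝ} (ha : 0 ≤ a) (hb : 0 ≤ b) :
    ∫ y, f y ∂(ENNReal.ofReal a • μ + ENNReal.ofReal b • ν)
      = a • ∫ y, f y ∂μ + b • ∫ y, f y ∂ν := by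
  rw [integral_add_measure (hμ.smul_measure ENNReal.ofReal_ne_top)
      (hν.smul_measure ENNReal.ofReal_ne_top),
    integral_smul_measure, integral_smul_measure, ENNReal.toReal_ofReal ha,
    ENNReal.toReal_ofReal hb]

end Mixture

section Reflection

variable {μ ν : Measure ℝ}

lemma integral_id_map_neg : ∫ z, z ∂(μ.map (fun y : ℝ => -y)) = -∫ y, y ∂μ := by
  rw [integral_map measurable_neg.aemeasurable
    (measurable_id' : Measurable fun z : ℝ => z).aestronglyMeasurable]
  exact integral_neg fun y : ℝ => y

lemma MeasureTheory.Integrable.id_map_neg (h : Integrable (fun y : ℝ => y) μ) :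
    Integrable (fun z : ℝ => z) (μ.map (fun y : ℝ => -y)) := by
  rw [integrable_map_measure (measurable_id' : Measurable fun z : ℝ => z).aestronglyMeasurable
    measurable_neg.aemeasurable]
  exact h.neg

lemma integral_id_smul_add_smul_map_neg (hμ : Integrable (fun y : ℝ => y) μ)
    (hν : Integrable (fun y : ℝ => y) ν) {c : ℝ≥0∞} (hc : c ≠ ∞) :
    ∫ z, z ∂(c • μ + c • ν.map (fun y : ℝ => -y)) = c.toReal * ((∫ y, y ∂μ) - ∫ y, y ∂ν) := by
  rw [integral_add_measure (hμ.smul_measure hc) (hν.id_map_neg.smul_measure hc),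
    integral_smul_measure, integral_smul_measure, integral_id_map_neg, smul_eq_mul, smul_eq_mul]
  ring

end Reflection

lemma integral_id_ofReal_smul_dirac_one_add_dirac_neg_one {q : ℝ} (hq : 0 ≤ q) (hq' : q ≤ 1) :
    ∫ t, t ∂(ENNReal.ofReal q • Measure.dirac (1 : ℝ)
      + ENNReal.ofReal (1 - q) • Measure.dirac (-1 : ℝ)) = 2 * q - 1 := by
  rw [integral_ofReal_smul_add_ofReal_smul_measure (integrable_dirac (by simp))
    (integrable_dirac (by simp)) hq (sub_nonneg.2 hq'), integral_dirac, integral_dirac,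
    smul_eq_mul, smul_eq_mul]
  ring

theorem uplift_eq_ratio_of_z_w_general {X : Type*} (ν1 νm1 : X → Measure ℝ)
    (q1 q2 : X → ℝ) (x : X)
    (hint1 : Integrable (fun y : ℝ => y) (ν1 x))
    (hintm1 : Integrable (fun y : ℝ => y) (νm1 x))
    (hq1 : 0 ≤ q1 x) (hq1' : q1 x ≤ 1) (hq2 : 0 ≤ q2 x) (hq2' : q2 x ≤ 1) :
    (∫ z, z ∂((2 : ℝ≥0∞)⁻¹ •
          (ENNReal.ofReal (q1 x) • ν1 x + ENNReal.ofReal (1 - q1 x) • νm1 x)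
        + (2 : ℝ≥0∞)⁻¹ •
          ((ENNReal.ofReal (q2 x) • ν1 x + ENNReal.ofReal (1 - q2 x) • νm1 x).map
            (fun y : ℝ => -y)))
      = (1 / 2) *
        ((∫ y, y ∂(ENNReal.ofReal (q1 x) • ν1 x + ENNReal.ofReal (1 - q1 x) • νm1 x))
          - ∫ y, y ∂(ENNReal.ofReal (q2 x) • ν1 x + ENNReal.ofReal (1 - q2 x) • νm1 x)))
    ∧
    (∫ w, w ∂((2 : ℝ≥0∞)⁻¹ •
          (ENNReal.ofReal (q1 x) • Measure.dirac (1 : ℝ)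
            + ENNReal.ofReal (1 - q1 x) • Measure.dirac (-1 : ℝ))
        + (2 : ℝ≥0∞)⁻¹ •
          ((ENNReal.ofReal (q2 x) • Measure.dirac (1 : ℝ)
            + ENNReal.ofReal (1 - q2 x) • Measure.dirac (-1 : ℝ)).map
            (fun t : ℝ => -t)))
      = (1 / 2) *
        ((∫ t, t ∂(ENNReal.ofReal (q1 x) • Measure.dirac (1 : ℝ)
            + ENNReal.ofReal (1 - q1 x) • Measure.dirac (-1 : ℝ)))
          - ∫ t, t ∂(ENNReal.ofReal (q2 x) • Measure.dirac (1 : ℝ)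
            + ENNReal.ofReal (1 - q2 x) • Measure.dirac (-1 : ℝ))))
    ∧
    (q1 x ≠ q2 x →
      (∫ y, y ∂ν1 x) - (∫ y, y ∂νm1 x) =
        2 * (∫ z, z ∂((2 : ℝ≥0∞)⁻¹ •
              (ENNReal.ofReal (q1 x) • ν1 x + ENNReal.ofReal (1 - q1 x) • νm1 x)
            + (2 : ℝ≥0∞)⁻¹ •
              ((ENNReal.ofReal (q2 x) • ν1 x + ENNReal.ofReal (1 - q2 x) • νm1 x).map
                (fun y : ℝ => -y))))
          / (∫ w, w ∂((2 : ℝ≥0∞)⁻¹ •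
              (ENNReal.ofReal (q1 x) • Measure.dirac (1 : ℝ)
                + ENNReal.ofReal (1 - q1 x) • Measure.dirac (-1 : ℝ))
            + (2 : ℝ≥0∞)⁻¹ •
              ((ENNReal.ofReal (q2 x) • Measure.dirac (1 : ℝ)
                + ENNReal.ofReal (1 - q2 x) • Measure.dirac (-1 : ℝ)).map
                (fun t : ℝ => -t))))) := by
  have hδ (a : ℝ) : Integrable (fun t : ℝ => t) (Measure.dirac a) := integrable_dirac (by simp)
  have hhalf : (2 : ℝ≥0∞)⁻¹.toReal = 1 / 2 := by norm_num
  have hZ := integral_id_smul_add_smul_map_neg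
    (hint1.ofReal_smul_add_ofReal_smul_measure hintm1 (q1 x) (1 - q1 x))
    (hint1.ofReal_smul_add_ofReal_smul_measure hintm1 (q2 x) (1 - q2 x))
    (ENNReal.inv_ne_top.2 two_ne_zero)
  have hW := integral_id_smul_add_smul_map_neg
    ((hδ 1).ofReal_smul_add_ofReal_smul_measure (hδ (-1)) (q1 x) (1 - q1 x))
    ((hδ 1).ofReal_smul_add_ofReal_smul_measure (hδ (-1)) (q2 x) (1 - q2 x))
    (ENNReal.inv_ne_top.2 two_ne_zero)
  rw [hhalf] at hZ hW
  refine ⟨hZ, hW, fun hne => ?_⟩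
  rw [hZ, hW,
    integral_ofReal_smul_add_ofReal_smul_measure hint1 hintm1 hq1 (sub_nonneg.2 hq1'),
    integral_ofReal_smul_add_ofReal_smul_measure hint1 hintm1 hq2 (sub_nonneg.2 hq2'),
    integral_id_ofReal_smul_dirac_one_add_dirac_neg_one hq1 hq1',
    integral_id_ofReal_smul_dirac_one_add_dirac_neg_one hq2 hq2',
    eq_div_iff (by simpa [sub_eq_zero] using hne)]
  simp only [smul_eq_mul]
  ring

/-- Lemma 2 (disentangled variables `z`, `w`): the outcome kernel is given by
conditional laws `ν1 x = p(y | x, t=1)` and `νm1 x = p(y | x, t=-1)`;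
the populations' treatment probabilities are `q1 x = p_1(t=1|x)`,
`q2 x = p_2(t=1|x)`, so `p_k(y|x)` is the corresponding mixture and
`p_k(t|x)` is the mixture of Dirac measures at `1` and `-1`.
The auxiliary laws are `p(z|x) = ½ p_1(y|x) + ½ (neg)_* p_2(y|x)` and
`p(w|x) = ½ p_1(t|x) + ½ (neg)_* p_2(t|x)`.  Then `E[z|x]` and `E[w|x]` are
half the mean differences, and `u(x) = 2 E[z|x] / E[w|x]` whenever
`q1 x ≠ q2 x`. -/
theorem uplift_eq_ratio_of_z_w {X : Type*} (ν1 νm1 : X → Measure ℝ)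
    (q1 q2 : X → ℝ) (x : X)
    (hν1 : IsProbabilityMeasure (ν1 x)) (hνm1 : IsProbabilityMeasure (νm1 x))
    (hint1 : Integrable (fun y : ℝ => y) (ν1 x))
    (hintm1 : Integrable (fun y : ℝ => y) (νm1 x))
    (hq1 : 0 ≤ q1 x) (hq1' : q1 x ≤ 1) (hq2 : 0 ≤ q2 x) (hq2' : q2 x ≤ 1) :
    (∫ z, z ∂((2 : ℝ≥0∞)⁻¹ •
          (ENNReal.ofReal (q1 x) • ν1 x + ENNReal.ofReal (1 - q1 x) • νm1 x)
        + (2 : ℝ≥0∞)⁻¹ •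
          ((ENNReal.ofReal (q2 x) • ν1 x + ENNReal.ofReal (1 - q2 x) • νm1 x).map
            (fun y : ℝ => -y)))
      = (1 / 2) *
        ((∫ y, y ∂(ENNReal.ofReal (q1 x) • ν1 x + ENNReal.ofReal (1 - q1 x) • νm1 x))
          - ∫ y, y ∂(ENNReal.ofReal (q2 x) • ν1 x + ENNReal.ofReal (1 - q2 x) • νm1 x)))
    ∧
    (∫ w, w ∂((2 : ℝ≥0∞)⁻¹ •
          (ENNReal.ofReal (q1 x) • Measure.dirac (1 : ℝ)
            + ENNReal.ofReal (1 - q1 x) • Measure.dirac (-1 : ℝ))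
        + (2 : ℝ≥0∞)⁻¹ •
          ((ENNReal.ofReal (q2 x) • Measure.dirac (1 : ℝ)
            + ENNReal.ofReal (1 - q2 x) • Measure.dirac (-1 : ℝ)).map
            (fun t : ℝ => -t)))
      = (1 / 2) *
        ((∫ t, t ∂(ENNReal.ofReal (q1 x) • Measure.dirac (1 : ℝ)
            + ENNReal.ofReal (1 - q1 x) • Measure.dirac (-1 : ℝ)))
          - ∫ t, t ∂(ENNReal.ofReal (q2 x) • Measure.dirac (1 : ℝ)
            + ENNReal.ofReal (1 - q2 x) • Measure.dirac (-1 : ℝ))))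
    ∧
    (q1 x ≠ q2 x →
      (∫ y, y ∂ν1 x) - (∫ y, y ∂νm1 x) =
        2 * (∫ z, z ∂((2 : ℝ≥0∞)⁻¹ •
              (ENNReal.ofReal (q1 x) • ν1 x + ENNReal.ofReal (1 - q1 x) • νm1 x)
            + (2 : ℝ≥0∞)⁻¹ •
              ((ENNReal.ofReal (q2 x) • ν1 x + ENNReal.ofReal (1 - q2 x) • νm1 x).map
                (fun y : ℝ => -y))))
          / (∫ w, w ∂((2 : ℝ≥0∞)⁻¹ •
              (ENNReal.ofReal (q1 x) • Measure.dirac (1 : ℝ)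
                + ENNReal.ofReal (1 - q1 x) • Measure.dirac (-1 : ℝ))
            + (2 : ℝ≥0∞)⁻¹ •
              ((ENNReal.ofReal (q2 x) • Measure.dirac (1 : ℝ)
                + ENNReal.ofReal (1 - q2 x) • Measure.dirac (-1 : ℝ)).map
                (fun t : ℝ => -t))))) :=
  uplift_eq_ratio_of_z_w_general ν1 νm1 q1 q2 x hint1 hintm1 hq1 hq1' hq2 hq2'
end

section
/- In the linear-in-parameter model setting, define J_hat(α, β) = 2 α^T A β - 4 b^T β - β^T C β with C symmetric positive semidefinite, and regularized objective with Ω(α, β) = λ_f α^T α - λ_g β^T β for λ_f, λ_g > 0. Then the inner maximizer is β̂(α) = (C + λ_g I)^{-1}(A^T α - 2b), and the solution of min_α max_β [J_hat(α, β) + Ω(α, β)] is α̂ = 2(A C̃^{-1} A^T + λ_f I)^{-1} A C̃^{-1} b where C̃ = C + λ_g I. -/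
open Matrix

variable {n m : ℕ}

private lemma symm_dot (M : Matrix (Fin n) (Fin n) ℝ) (h : Mᵀ = M) (x y : Fin n → ℝ) :
    (M *ᵥ x) ⬝ᵥ y = x ⬝ᵥ (M *ᵥ y) := by
  rw [dotProduct_comm, dotProduct_mulVec, ← mulVec_transpose, h, dotProduct_comm]

private lemma pd_symm (M : Matrix (Fin n) (Fin n) ℝ) (hM : M.PosDef) : Mᵀ = M := by
  have := hM.isHermitian
  rwa [Matrix.IsHermitian, conjTranspose_eq_transpose_of_trivial] at this

private lemma pd_inv_symm (M : Matrix (Fin n) (Fin n) ℝ) (hM : M.PosDef) : (M⁻¹)ᵀ = M⁻¹ := by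
  rw [transpose_nonsing_inv, pd_symm M hM]

private lemma pd_cancel (M : Matrix (Fin n) (Fin n) ℝ) (hM : M.PosDef) (v : Fin n → ℝ) :
    M *ᵥ (M⁻¹ *ᵥ v) = v := by
  rw [mulVec_mulVec, Matrix.mul_nonsing_inv _ hM.det_pos.ne'.isUnit, one_mulVec]

private lemma pd_nonneg (M : Matrix (Fin n) (Fin n) ℝ) (hM : M.PosDef) (x : Fin n → ℝ) :
    0 ≤ x ⬝ᵥ (M *ᵥ x) := by
  simpa using hM.posSemidef.dotProduct_mulVec_nonneg x

private lemma quad_max (M : Matrix (Fin n) (Fin n) ℝ) (hM : M.PosDef) (v β : Fin n → ℝ) :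
    2 * (v ⬝ᵥ β) - β ⬝ᵥ (M *ᵥ β) ≤ v ⬝ᵥ (M⁻¹ *ᵥ v) := by
  set w := M⁻¹ *ᵥ v with hw
  have h0 : 0 ≤ (β - w) ⬝ᵥ (M *ᵥ (β - w)) := pd_nonneg M hM _
  have hMw : M *ᵥ w = v := pd_cancel M hM v
  have hexp : (β - w) ⬝ᵥ (M *ᵥ (β - w))
      = β ⬝ᵥ (M *ᵥ β) - 2 * (v ⬝ᵥ β) + v ⬝ᵥ w := by
    have h1 : w ⬝ᵥ (M *ᵥ β) = v ⬝ᵥ β := by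
      rw [← symm_dot M (pd_symm M hM), hMw]
    have h2 : β ⬝ᵥ (M *ᵥ w) = v ⬝ᵥ β := by rw [hMw, dotProduct_comm]
    have h3 : w ⬝ᵥ (M *ᵥ w) = v ⬝ᵥ w := by rw [hMw, dotProduct_comm]
    rw [mulVec_sub, dotProduct_sub, sub_dotProduct, sub_dotProduct, h1, h2, h3]
    ring
  linarith

private lemma quad_max_eq (M : Matrix (Fin n) (Fin n) ℝ) (hM : M.PosDef) (v : Fin n → ℝ) :
    2 * (v ⬝ᵥ (M⁻¹ *ᵥ v)) - (M⁻¹ *ᵥ v) ⬝ᵥ (M *ᵥ (M⁻¹ *ᵥ v)) = v ⬝ᵥ (M⁻¹ *ᵥ v) := by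
  rw [pd_cancel M hM, dotProduct_comm (M⁻¹ *ᵥ v) v]
  ring

private lemma smul_one_pd (c : ℝ) (hc : 0 < c) :
    (c • (1 : Matrix (Fin n) (Fin n) ℝ)).PosDef := by
  refine Matrix.PosDef.of_dotProduct_mulVec_pos ?_ (fun x hx => ?_)
  · rw [Matrix.IsHermitian, conjTranspose_eq_transpose_of_trivial, transpose_smul,
      transpose_one]
  · have : (c • (1 : Matrix (Fin n) (Fin n) ℝ)) *ᵥ x = c • x := by
      rw [smul_mulVec, one_mulVec]
    rw [this]
    simp only [star_trivial, dotProduct_smul, smul_eq_mul]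
    have hnn : 0 ≤ x ⬝ᵥ x := by
      simpa [star_trivial] using dotProduct_self_star_nonneg x
    have hne : x ⬝ᵥ x ≠ 0 := fun h => hx (dotProduct_self_eq_zero.mp h)
    have hxx : 0 < x ⬝ᵥ x := lt_of_le_of_ne hnn (Ne.symm hne)
    positivity

private lemma transp_dot (A : Matrix (Fin m) (Fin n) ℝ) (a : Fin m → ℝ) (x : Fin n → ℝ) :
    (Aᵀ *ᵥ a) ⬝ᵥ x = a ⬝ᵥ (A *ᵥ x) := by
  rw [mulVec_transpose, ← dotProduct_mulVec]

/-- Analytic solution for the regularized empirical min–max problem with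
linear-in-parameter models: `Ĵ(α, β) = 2 αᵀAβ - 4 bᵀβ - βᵀCβ`,
`Ω(α, β) = λ_f αᵀα - λ_g βᵀβ`.  The inner maximizer is
`β̂(α) = (C + λ_g I)⁻¹(Aᵀα - 2b)` and the outer minimizer is
`α̂ = 2 (A C̃⁻¹ Aᵀ + λ_f I)⁻¹ A C̃⁻¹ b` with `C̃ = C + λ_g I`. -/
theorem linear_minmax_solution {bf bg : ℕ}
    (A : Matrix (Fin bf) (Fin bg) ℝ) (b : Fin bg → ℝ)
    (C : Matrix (Fin bg) (Fin bg) ℝ) (hC : C.PosSemidef)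
    (lf lg : ℝ) (hlf : 0 < lf) (hlg : 0 < lg) :
    (∀ α : Fin bf → ℝ, ∀ β : Fin bg → ℝ,
      (2 * (α ⬝ᵥ (A *ᵥ β)) - 4 * (b ⬝ᵥ β) - β ⬝ᵥ (C *ᵥ β))
        + (lf * (α ⬝ᵥ α) - lg * (β ⬝ᵥ β))
      ≤ (2 * (α ⬝ᵥ (A *ᵥ ((C + lg • (1 : Matrix (Fin bg) (Fin bg) ℝ))⁻¹ *ᵥ
            (Aᵀ *ᵥ α - (2 : ℝ) • b))))
          - 4 * (b ⬝ᵥ ((C + lg • 1)⁻¹ *ᵥ (Aᵀ *ᵥ α - (2 : ℝ) • b)))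
          - ((C + lg • 1)⁻¹ *ᵥ (Aᵀ *ᵥ α - (2 : ℝ) • b)) ⬝ᵥ
              (C *ᵥ ((C + lg • 1)⁻¹ *ᵥ (Aᵀ *ᵥ α - (2 : ℝ) • b))))
        + (lf * (α ⬝ᵥ α)
          - lg * (((C + lg • 1)⁻¹ *ᵥ (Aᵀ *ᵥ α - (2 : ℝ) • b)) ⬝ᵥ
              ((C + lg • 1)⁻¹ *ᵥ (Aᵀ *ᵥ α - (2 : ℝ) • b)))))
    ∧
    (∀ α : Fin bf → ℝ,
      (fun a : Fin bf → ℝ =>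
        (2 * (a ⬝ᵥ (A *ᵥ ((C + lg • (1 : Matrix (Fin bg) (Fin bg) ℝ))⁻¹ *ᵥ
              (Aᵀ *ᵥ a - (2 : ℝ) • b))))
          - 4 * (b ⬝ᵥ ((C + lg • 1)⁻¹ *ᵥ (Aᵀ *ᵥ a - (2 : ℝ) • b)))
          - ((C + lg • 1)⁻¹ *ᵥ (Aᵀ *ᵥ a - (2 : ℝ) • b)) ⬝ᵥ
              (C *ᵥ ((C + lg • 1)⁻¹ *ᵥ (Aᵀ *ᵥ a - (2 : ℝ) • b))))
        + (lf * (a ⬝ᵥ a)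
          - lg * (((C + lg • 1)⁻¹ *ᵥ (Aᵀ *ᵥ a - (2 : ℝ) • b)) ⬝ᵥ
              ((C + lg • 1)⁻¹ *ᵥ (Aᵀ *ᵥ a - (2 : ℝ) • b)))))
        ((2 : ℝ) • ((A * (C + lg • 1)⁻¹ * Aᵀ + lf • 1)⁻¹ *ᵥ
            (A *ᵥ ((C + lg • 1)⁻¹ *ᵥ b))))
      ≤ (fun a : Fin bf → ℝ =>
        (2 * (a ⬝ᵥ (A *ᵥ ((C + lg • (1 : Matrix (Fin bg) (Fin bg) ℝ))⁻¹ *ᵥ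
              (Aᵀ *ᵥ a - (2 : ℝ) • b))))
          - 4 * (b ⬝ᵥ ((C + lg • 1)⁻¹ *ᵥ (Aᵀ *ᵥ a - (2 : ℝ) • b)))
          - ((C + lg • 1)⁻¹ *ᵥ (Aᵀ *ᵥ a - (2 : ℝ) • b)) ⬝ᵥ
              (C *ᵥ ((C + lg • 1)⁻¹ *ᵥ (Aᵀ *ᵥ a - (2 : ℝ) • b))))
        + (lf * (a ⬝ᵥ a)
          - lg * (((C + lg • 1)⁻¹ *ᵥ (Aᵀ *ᵥ a - (2 : ℝ) • b)) ⬝ᵥ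
              ((C + lg • 1)⁻¹ *ᵥ (Aᵀ *ᵥ a - (2 : ℝ) • b))))) α) := by
  have hCtpd : (C + lg • (1 : Matrix (Fin bg) (Fin bg) ℝ)).PosDef :=
    Matrix.PosDef.posSemidef_add hC (smul_one_pd lg hlg)
  set Ct := C + lg • (1 : Matrix (Fin bg) (Fin bg) ℝ) with hCtdef
  have expand : ∀ (α : Fin bf → ℝ) (β : Fin bg → ℝ),
      (2 * (α ⬝ᵥ (A *ᵥ β)) - 4 * (b ⬝ᵥ β) - β ⬝ᵥ (C *ᵥ β))
        + (lf * (α ⬝ᵥ α) - lg * (β ⬝ᵥ β))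
      = (2 * ((Aᵀ *ᵥ α - (2 : ℝ) • b) ⬝ᵥ β) - β ⬝ᵥ (Ct *ᵥ β)) + lf * (α ⬝ᵥ α) := by
    intro α β
    have h1 : (Aᵀ *ᵥ α) ⬝ᵥ β = α ⬝ᵥ (A *ᵥ β) := transp_dot A α β
    have h2 : Ct *ᵥ β = C *ᵥ β + lg • β := by
      rw [hCtdef, add_mulVec, smul_mulVec, one_mulVec]
    rw [h2, dotProduct_add, sub_dotProduct, smul_dotProduct, h1, dotProduct_smul]
    simp only [smul_eq_mul]
    ring
  have hE : ∀ a : Fin bf → ℝ,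
      (2 * (a ⬝ᵥ (A *ᵥ (Ct⁻¹ *ᵥ (Aᵀ *ᵥ a - (2 : ℝ) • b))))
        - 4 * (b ⬝ᵥ (Ct⁻¹ *ᵥ (Aᵀ *ᵥ a - (2 : ℝ) • b)))
        - (Ct⁻¹ *ᵥ (Aᵀ *ᵥ a - (2 : ℝ) • b)) ⬝ᵥ (C *ᵥ (Ct⁻¹ *ᵥ (Aᵀ *ᵥ a - (2 : ℝ) • b))))
      + (lf * (a ⬝ᵥ a)
        - lg * ((Ct⁻¹ *ᵥ (Aᵀ *ᵥ a - (2 : ℝ) • b)) ⬝ᵥ (Ct⁻¹ *ᵥ (Aᵀ *ᵥ a - (2 : ℝ) • b))))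
      = (Aᵀ *ᵥ a - (2 : ℝ) • b) ⬝ᵥ (Ct⁻¹ *ᵥ (Aᵀ *ᵥ a - (2 : ℝ) • b)) + lf * (a ⬝ᵥ a) := by
    intro a
    rw [expand a (Ct⁻¹ *ᵥ (Aᵀ *ᵥ a - (2 : ℝ) • b)), quad_max_eq Ct hCtpd]
  constructor
  · intro α β
    rw [expand α β, expand α (Ct⁻¹ *ᵥ (Aᵀ *ᵥ α - (2 : ℝ) • b))]
    apply add_le_add_left
    rw [quad_max_eq Ct hCtpd]
    exact quad_max Ct hCtpd _ β
  · intro α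
    beta_reduce
    set w : Fin bg → ℝ := Ct⁻¹ *ᵥ b with hwdef
    set M := A * Ct⁻¹ * Aᵀ + lf • (1 : Matrix (Fin bf) (Fin bf) ℝ) with hMdef
    have hMpsd : (A * Ct⁻¹ * Aᵀ).PosSemidef := by
      have := hCtpd.inv.posSemidef.mul_mul_conjTranspose_same A
      rwa [conjTranspose_eq_transpose_of_trivial] at this
    have hMpd : M.PosDef := Matrix.PosDef.posSemidef_add hMpsd (smul_one_pd lf hlf)
    have hNsymm : (Ct⁻¹)ᵀ = Ct⁻¹ := pd_inv_symm Ct hCtpd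
    have hQ : ∀ a : Fin bf → ℝ,
        (Aᵀ *ᵥ a - (2 : ℝ) • b) ⬝ᵥ (Ct⁻¹ *ᵥ (Aᵀ *ᵥ a - (2 : ℝ) • b)) + lf * (a ⬝ᵥ a)
        = -(2 * (((2 : ℝ) • (A *ᵥ w)) ⬝ᵥ a) - a ⬝ᵥ (M *ᵥ a)) + 4 * (b ⬝ᵥ w) := by
      intro a
      have e1 : Ct⁻¹ *ᵥ (Aᵀ *ᵥ a - (2 : ℝ) • b)
          = Ct⁻¹ *ᵥ (Aᵀ *ᵥ a) - (2 : ℝ) • w := by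
        rw [mulVec_sub, mulVec_smul, hwdef]
      have e2 : (Aᵀ *ᵥ a) ⬝ᵥ (Ct⁻¹ *ᵥ (Aᵀ *ᵥ a)) = a ⬝ᵥ ((A * Ct⁻¹ * Aᵀ) *ᵥ a) := by
        rw [transp_dot, ← mulVec_mulVec, ← mulVec_mulVec]
      have e3 : (Aᵀ *ᵥ a) ⬝ᵥ w = a ⬝ᵥ (A *ᵥ w) := transp_dot A a w
      have e4 : b ⬝ᵥ (Ct⁻¹ *ᵥ (Aᵀ *ᵥ a)) = a ⬝ᵥ (A *ᵥ w) := by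
        rw [← symm_dot Ct⁻¹ hNsymm, ← hwdef, ← transp_dot A a w, dotProduct_comm]
      have e5 : a ⬝ᵥ (M *ᵥ a) = a ⬝ᵥ ((A * Ct⁻¹ * Aᵀ) *ᵥ a) + lf * (a ⬝ᵥ a) := by
        rw [hMdef, add_mulVec, dotProduct_add, smul_mulVec, one_mulVec,
          dotProduct_smul, smul_eq_mul]
      have e6 : ((2 : ℝ) • (A *ᵥ w)) ⬝ᵥ a = 2 * (a ⬝ᵥ (A *ᵥ w)) := by
        rw [smul_dotProduct, smul_eq_mul, dotProduct_comm]
      rw [e1, dotProduct_sub, sub_dotProduct, sub_dotProduct, dotProduct_smul,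
        smul_dotProduct, smul_dotProduct, dotProduct_smul, e2, e3, e4, e5, e6]
      simp only [smul_eq_mul]
      ring
    have halpha : (2 : ℝ) • (M⁻¹ *ᵥ (A *ᵥ w)) = M⁻¹ *ᵥ ((2 : ℝ) • (A *ᵥ w)) := by
      rw [mulVec_smul]
    rw [halpha, hE, hE, hQ, hQ, quad_max_eq M hMpd]
    have := quad_max M hMpd ((2 : ℝ) • (A *ᵥ w)) α
    linarith
end

section
/- Under Pr[f(x) = f(x')] = 0 for x, x' i.i.d. ∼ p, the ranking objective Rank(f) = E[1[f(x') ≤ f(x)](u(x) - u(x'))] is maximized by any f that is order-isomorphic to u, i.e., any f satisfying (f(x) ≤ f(x') ⟺ u(x) ≤ u(x')) for almost every pair (x, x'); in particular, f = u is a maximizer. -/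
/-!
Swapping the two i.i.d. draws leaves the law of the pair unchanged and negates `u x - u x'`, so
`2 Rank(g)` is the expectation of `1[g x' ≤ g x] (u x - u x') + 1[g x ≤ g x'] (u x' - u x)`.
Since at least one of the two indicators is `1`, this integrand is at most `|u x - u x'|`, with
equality for `g = u`. Hence `u` maximizes `Rank`, and any `f` order-isomorphic to `u` has the same
integrand as `u` almost everywhere.
-/

open MeasureTheory

namespace Ranking

variable {X : Type*}

noncomputable def rankIntegrand (u g : X → ℝ) (q : X × X) : ℝ :=
  (if g q.2 ≤ g q.1 then 1 else 0) * (u q.1 - u q.2)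

theorem rankIntegrand_add_swap_le (u g : X → ℝ) (q : X × X) :
    rankIntegrand u g q + rankIntegrand u g q.swap ≤ |u q.1 - u q.2| := by
  unfold rankIntegrand
  rcases abs_cases (u q.1 - u q.2) with ⟨h, _⟩ | ⟨h, _⟩ <;>
    simp only [Prod.fst_swap, Prod.snd_swap] <;> split_ifs <;> linarith

theorem rankIntegrand_self_add_swap (u : X → ℝ) (q : X × X) :
    rankIntegrand u u q + rankIntegrand u u q.swap = |u q.1 - u q.2| := by
  unfold rankIntegrand
  rcases abs_cases (u q.1 - u q.2) with ⟨h, _⟩ | ⟨h, _⟩ <;>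
    simp only [Prod.fst_swap, Prod.snd_swap] <;> split_ifs <;> linarith

variable [MeasurableSpace X]

noncomputable def rankObjective (p : Measure X) (u g : X → ℝ) : ℝ :=
  ∫ q, rankIntegrand u g q ∂(p.prod p)

theorem integrable_rankIntegrand {p : Measure X} [IsFiniteMeasure p] {u g : X → ℝ}
    (hu : Integrable u p) (hg : Measurable g) :
    Integrable (rankIntegrand u g) (p.prod p) := by
  refine ((hu.comp_fst p).sub (hu.comp_snd p)).bdd_mul (c := 1) ?_ (.of_forall fun q ↦ ?_)
  · exact (Measurable.ite (measurableSet_le (hg.comp measurable_snd) (hg.comp measurable_fst))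
      measurable_const measurable_const).aestronglyMeasurable
  · split_ifs <;> simp

theorem two_mul_rankObjective {p : Measure X} [IsFiniteMeasure p] {u g : X → ℝ}
    (hu : Integrable u p) (hg : Measurable g) :
    2 * rankObjective p u g = ∫ q, rankIntegrand u g q + rankIntegrand u g q.swap ∂(p.prod p) := by
  have hint := integrable_rankIntegrand hu hg
  have hint_swap : Integrable (fun q ↦ rankIntegrand u g q.swap) (p.prod p) := hint.swap
  rw [integral_add hint hint_swap, integral_prod_swap, rankObjective, two_mul]

theorem rankObjective_le_rankObjective_self {p : Measure X} [IsFiniteMeasure p] {u g : X → ℝ}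
    (hu : Measurable u) (hui : Integrable u p) (hg : Measurable g) :
    rankObjective p u g ≤ rankObjective p u u := by
  have hint := integrable_rankIntegrand hui hg
  have hint_self := integrable_rankIntegrand hui hu
  suffices 2 * rankObjective p u g ≤ 2 * rankObjective p u u by linarith
  rw [two_mul_rankObjective hui hg, two_mul_rankObjective hui hu]
  refine integral_mono (hint.add hint.swap) (hint_self.add hint_self.swap) fun q ↦ ?_
  simpa only [rankIntegrand_self_add_swap] using rankIntegrand_add_swap_le u g q

theorem rankObjective_congr_ae {p : Measure X} {u f g : X → ℝ}
    (h : ∀ᵐ q ∂(p.prod p), (f q.2 ≤ f q.1 ↔ g q.2 ≤ g q.1)) :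
    rankObjective p u f = rankObjective p u g :=
  integral_congr_ae <| h.mono fun q hq ↦ by simp only [rankIntegrand, hq]

end Ranking

open Ranking in
theorem order_isomorphic_maximizes_rank_general {X : Type*} [MeasurableSpace X]
    (p : Measure X) [IsProbabilityMeasure p] (f u : X → ℝ)
    (hu : Measurable u) (hui : Integrable u p)
    (hiso : ∀ᵐ q : X × X ∂(p.prod p), (f q.1 ≤ f q.2 ↔ u q.1 ≤ u q.2)) :
    ∀ g : X → ℝ, Measurable g →
      (∫ q : X × X, (if g q.2 ≤ g q.1 then (1 : ℝ) else 0) * (u q.1 - u q.2)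
          ∂(p.prod p))
        ≤ ∫ q : X × X, (if f q.2 ≤ f q.1 then (1 : ℝ) else 0) * (u q.1 - u q.2)
            ∂(p.prod p) := by
  intro g hg
  have hiso_swap : ∀ᵐ q : X × X ∂(p.prod p), (f q.2 ≤ f q.1 ↔ u q.2 ≤ u q.1) :=
    Measure.measurePreserving_swap.quasiMeasurePreserving.ae hiso
  calc rankObjective p u g ≤ rankObjective p u u := rankObjective_le_rankObjective_self hu hui hg
    _ = rankObjective p u f := (rankObjective_congr_ae hiso_swap).symm

/-- Under the no-tie condition for `f`, any `f` order-isomorphic to `u`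
(i.e., `f(x) ≤ f(x') ⟺ u(x) ≤ u(x')` for almost every pair) maximizes the
ranking objective `Rank(g) = E[1[g(x') ≤ g(x)](u(x) - u(x'))]`; in particular,
`f = u` is a maximizer. -/
theorem order_isomorphic_maximizes_rank {X : Type*} [MeasurableSpace X]
    (p : Measure X) [IsProbabilityMeasure p] (f u : X → ℝ)
    (hf : Measurable f) (hu : Measurable u) (hui : Integrable u p)
    (hties : (p.prod p) {q : X × X | f q.1 = f q.2} = 0)
    (hiso : ∀ᵐ q : X × X ∂(p.prod p), (f q.1 ≤ f q.2 ↔ u q.1 ≤ u q.2)) :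
    ∀ g : X → ℝ, Measurable g →
      (∫ q : X × X, (if g q.2 ≤ g q.1 then (1 : ℝ) else 0) * (u q.1 - u q.2)
          ∂(p.prod p))
        ≤ ∫ q : X × X, (if f q.2 ≤ f q.1 then (1 : ℝ) else 0) * (u q.1 - u q.2)
            ∂(p.prod p) :=
  order_isomorphic_maximizes_rank_general p f u hu hui hiso
end

section
/- Let AUUC(f) = ∫₀¹ U(α; f) dC_α where C_α = Pr[f(x) < α] and U(α; f) = ∫ u(x) 1[α ≤ f(x)] p(x) dx. If f(x) has a density under p, then AUUC(f) = E_{x,x' i.i.d.∼p}[1[f(x) ≤ f(x')] u(x')]. -/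
open MeasureTheory

/-- AUUC as a pairwise expectation: with `U(α; f) = ∫ u(x) 1[α ≤ f(x)] p(x) dx`
and the outer integral taken with respect to the distribution `C` of `f(x)`
under `p` (the map measure `p.map f`), if `f(x)` has a density under `p`
(i.e., `p.map f ≪ volume`), then
`∫ U(α; f) dC_α = E_{x,x' i.i.d.∼p}[1[f(x) ≤ f(x')] u(x')]`. -/
theorem auuc_eq_pairwise {X : Type*} [MeasurableSpace X]
    (p : Measure X) [IsProbabilityMeasure p] (f u : X → ℝ)
    (hf : Measurable f) (hu : Measurable u) (hui : Integrable u p)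
    (hdens : (p.map f) ≪ (volume : Measure ℝ)) :
    (∫ α : ℝ, (∫ x, u x * (if α ≤ f x then (1 : ℝ) else 0) ∂p) ∂(p.map f))
      = ∫ q : X × X, (if f q.1 ≤ f q.2 then (1 : ℝ) else 0) * u q.2
          ∂(p.prod p) := by
  have hmeas : Measurable (fun q : ℝ × X => u q.2 * (if q.1 ≤ f q.2 then (1 : ℝ) else 0)) := by
    apply (hu.comp measurable_snd).mul
    exact Measurable.ite (measurableSet_le measurable_fst (hf.comp measurable_snd))
      measurable_const measurable_const
  have hsm : AEStronglyMeasurable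
      (fun α : ℝ => ∫ x, u x * (if α ≤ f x then (1 : ℝ) else 0) ∂p) (p.map f) :=
    (hmeas.stronglyMeasurable.integral_prod_right').aestronglyMeasurable
  rw [integral_map hf.aemeasurable hsm]
  -- RHS: integrability on the product measure
  have husnd : Integrable (fun q : X × X => u q.2) (p.prod p) := by
    have : (p.prod p).map Prod.snd = p := Measure.map_snd_prod.trans (by simp)
    rw [← this] at hui
    exact (integrable_map_measure hu.aestronglyMeasurable measurable_snd.aemeasurable).mp hui
  have hg : Integrable
      (fun q : X × X => (if f q.1 ≤ f q.2 then (1 : ℝ) else 0) * u q.2) (p.prod p) := by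
    apply husnd.bdd_mul (c := 1)
    · exact (Measurable.ite (measurableSet_le (hf.comp measurable_fst)
        (hf.comp measurable_snd)) measurable_const measurable_const).aestronglyMeasurable
    · exact Filter.Eventually.of_forall fun q => by split <;> simp
  rw [integral_prod _ hg]
  refine integral_congr_ae (Filter.Eventually.of_forall fun y => ?_)
  refine integral_congr_ae (Filter.Eventually.of_forall fun x => ?_)
  exact mul_comm _ _
end

section
/- Suppose W := inf_x |μ_w(x)| > 0 and u(x) = 2 μ_z(x)/μ_w(x). Then for any f ∈ L²(p): E_{x∼p}[(f(x) - u(x))²] ≤ (1/W²) E_{x∼p}[(μ_w(x) f(x) - 2 μ_z(x))²] = (1/W²) (ε_G(f) + sup_{g∈G} J(f,g)), where ε_G(f) := sup_{g∈L²(p)} J(f,g) - sup_{g∈G} J(f,g) and J(f,g) = 2E[(μ_w f - 2μ_z) g] - E[g²]. -/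
open MeasureTheory

lemma l2_integrable_mul {X : Type*} [MeasurableSpace X] {p : Measure X}
    {h g : X → ℝ} (hh : MemLp h 2 p) (hg : MemLp g 2 p) :
    Integrable (fun x => h x * g x) p := by
  have hint := (((hh.add hg).integrable_sq.sub hh.integrable_sq).sub hg.integrable_sq).div_const 2
  have heq : (fun x => h x * g x)
      = fun x => (((h x + g x) ^ 2 - h x ^ 2) - g x ^ 2) / 2 := by
    funext x; ring
  rw [heq]; exact hint

/-- Eq. (b2) in the proof of Theorem 2: with `W = inf_x |μ_w(x)| > 0` and
`u = 2 μ_z / μ_w`, for any `f ∈ L²(p)`,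
`E[(f - u)²] ≤ (1/W²) E[(μ_w f - 2 μ_z)²]`, and
`E[(μ_w f - 2 μ_z)²] = ε_G(f) + sup_{g ∈ G} J(f, g)` with
`ε_G(f) = sup_{g ∈ L²(p)} J(f, g) - sup_{g ∈ G} J(f, g)` and
`J(f, g) = 2 E[(μ_w f - 2 μ_z) g] - E[g²]`. -/
theorem mse_bound_via_W {X : Type*} [MeasurableSpace X] (p : Measure X)
    [IsProbabilityMeasure p] (μw μz f : X → ℝ) (W : ℝ) (hW : 0 < W)
    (hWle : ∀ x, W ≤ |μw x|)
    (hμwm : Measurable μw) (hμzm : Measurable μz)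
    (hμwb : ∃ C, ∀ x, |μw x| ≤ C) (hμzb : ∃ C, ∀ x, |μz x| ≤ C)
    (hf : MemLp f 2 p)
    (G : Set (X → ℝ)) (hG : ∀ g ∈ G, MemLp g 2 p) (hGne : G.Nonempty)
    (hGbdd : BddAbove {r : ℝ | ∃ g ∈ G,
      r = 2 * (∫ x, (μw x * f x - 2 * μz x) * g x ∂p) - ∫ x, (g x) ^ 2 ∂p}) :
    (∫ x, (f x - 2 * μz x / μw x) ^ 2 ∂p)
      ≤ (1 / W ^ 2) * ∫ x, (μw x * f x - 2 * μz x) ^ 2 ∂p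
    ∧
    (∫ x, (μw x * f x - 2 * μz x) ^ 2 ∂p)
      = ((sSup {r : ℝ | ∃ g : X → ℝ, MemLp g 2 p ∧
            r = 2 * (∫ x, (μw x * f x - 2 * μz x) * g x ∂p) - ∫ x, (g x) ^ 2 ∂p})
          - sSup {r : ℝ | ∃ g ∈ G,
            r = 2 * (∫ x, (μw x * f x - 2 * μz x) * g x ∂p) - ∫ x, (g x) ^ 2 ∂p})
        + sSup {r : ℝ | ∃ g ∈ G,
            r = 2 * (∫ x, (μw x * f x - 2 * μz x) * g x ∂p) - ∫ x, (g x) ^ 2 ∂p} := by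
  obtain ⟨Cw, hCw⟩ := hμwb
  obtain ⟨Cz, hCz⟩ := hμzb
  -- h := μw f - 2 μz is in L²
  set h : X → ℝ := fun x => μw x * f x - 2 * μz x with hh_def
  have hμwne : ∀ x, μw x ≠ 0 := fun x hx => by
    have := hWle x; rw [hx, abs_zero] at this; linarith
  have hμwf : MemLp (fun x => μw x * f x) 2 p := by
    refine MemLp.of_le (hf.const_mul Cw) (hμwm.aemeasurable.aestronglyMeasurable.mul
      hf.aestronglyMeasurable) ?_
    filter_upwards with x
    simp only [Real.norm_eq_abs, abs_mul]
    calc |μw x| * |f x| ≤ Cw * |f x| :=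
          mul_le_mul_of_nonneg_right (hCw x) (abs_nonneg _)
      _ ≤ |Cw| * |f x| := mul_le_mul_of_nonneg_right (le_abs_self _) (abs_nonneg _)
  have hμz2 : MemLp μz 2 p :=
    (memLp_top_of_bound hμzm.aestronglyMeasurable Cz
      (Filter.Eventually.of_forall fun x => by simpa using hCz x)).mono_exponent le_top
  have hh : MemLp h 2 p := hμwf.sub (hμz2.const_mul 2)
  have hh2 : Integrable (fun x => h x ^ 2) p := hh.integrable_sq
  constructor
  · -- first part
    have hbound : ∀ x, (f x - 2 * μz x / μw x) ^ 2 ≤ (1 / W ^ 2) * h x ^ 2 := by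
      intro x
      have hne := hμwne x
      have h1 : f x - 2 * μz x / μw x = h x / μw x := by
        field_simp [hh_def]
        ring
      rw [h1, div_pow]
      rw [div_le_iff₀ (by positivity)]
      have hW2 : W ^ 2 ≤ μw x ^ 2 := by
        have := hWle x
        calc W ^ 2 ≤ |μw x| ^ 2 := by nlinarith [hW.le]
          _ = μw x ^ 2 := sq_abs _
      calc h x ^ 2 = (h x ^ 2 / W ^ 2) * W ^ 2 := by field_simp
        _ ≤ (h x ^ 2 / W ^ 2) * μw x ^ 2 := by
            apply mul_le_mul_of_nonneg_left hW2; positivity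
        _ = 1 / W ^ 2 * h x ^ 2 * μw x ^ 2 := by ring
    have hrhs : Integrable (fun x => (1 / W ^ 2) * h x ^ 2) p := hh2.const_mul _
    have hlhs : Integrable (fun x => (f x - 2 * μz x / μw x) ^ 2) p := by
      refine hrhs.mono' ?_ ?_
      · have ha : AEMeasurable (fun x => f x - 2 * μz x / μw x) p :=
          hf.aestronglyMeasurable.aemeasurable.sub
            (((hμzm.const_mul 2).aemeasurable).div hμwm.aemeasurable)
        exact (ha.pow_const 2).aestronglyMeasurable
      · filter_upwards with x
        rw [Real.norm_eq_abs, abs_of_nonneg (by positivity)]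
        exact hbound x
    calc (∫ x, (f x - 2 * μz x / μw x) ^ 2 ∂p)
        ≤ ∫ x, (1 / W ^ 2) * h x ^ 2 ∂p := integral_mono hlhs hrhs hbound
      _ = (1 / W ^ 2) * ∫ x, h x ^ 2 ∂p := integral_const_mul _ _
  · -- second part: (A - B) + B = A, and A = ∫ h²
    rw [sub_add_cancel]
    have key : IsGreatest {r : ℝ | ∃ g : X → ℝ, MemLp g 2 p ∧
        r = 2 * (∫ x, h x * g x ∂p) - ∫ x, (g x) ^ 2 ∂p} (∫ x, h x ^ 2 ∂p) := by
      constructor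
      · exact ⟨h, hh, by rw [integral_congr_ae (Filter.Eventually.of_forall fun x => by ring :
          (fun x => h x * h x) =ᵐ[p] fun x => h x ^ 2)]; ring⟩
      · rintro r ⟨g, hg, rfl⟩
        have hg2 : Integrable (fun x => g x ^ 2) p := hg.integrable_sq
        have hhg : Integrable (fun x => h x * g x) p := l2_integrable_mul hh hg
        have hsq : 0 ≤ ∫ x, (h x - g x) ^ 2 ∂p :=
          integral_nonneg fun x => sq_nonneg _
        have hexp : (∫ x, (h x - g x) ^ 2 ∂p)
            = (∫ x, h x ^ 2 ∂p) - 2 * (∫ x, h x * g x ∂p) + ∫ x, g x ^ 2 ∂p := by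
          have : (fun x => (h x - g x) ^ 2)
              = fun x => (h x ^ 2 - 2 * (h x * g x)) + g x ^ 2 := by
            funext x; ring
          have hA : Integrable (fun x => h x ^ 2 - 2 * (h x * g x)) p := by
            exact hh2.sub (hhg.const_mul 2)
          rw [this, integral_add hA hg2, integral_sub hh2 (hhg.const_mul 2),
            integral_const_mul]
        linarith
    exact (key.csSup_eq).symm
end
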